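/- Closed choice C_N is Weihrauch equivalent to the map max : ⊆ O(N) → N sending a nonempty finite open subset of N (given by enumeration) to its maximum. -/

import Mathlib

/- Common background: type-two computability on Baire space, represented spaces
(representations as functional relations), Weihrauch reducibility, Cantor space,
Martin-Löf tests, Martin-Löf randomness, and the basic multivalued functions
`C_ℕ`, `d_MLR`, `LAY`, the layer map and layerwise computability. -/

namespace WL

abbrev Baire : Type := ℕ → ℕ
abbrev Cantor : Type := ℕ → Bool

/-- The initial segment of length `m` of a point of Baire space. -/
def initSeg (p : Baire) (m : ℕ) : List ℕ := (List.range m).map p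

/-- `l` is a prefix of the sequence `p`. -/
def PrefixOfFun (l : List ℕ) (p : Baire) : Prop := ∀ i : Fin l.length, l.get i = p i

/-- `F` is a computable (partial) function on Baire space, with domain (at least) `D`:
there is a computable monotone word function producing, on longer and longer prefixes of
an input `p ∈ D`, longer and longer prefixes of `F p`. -/
def ComputableOn (F : Baire → Baire) (D : Set Baire) : Prop :=
  ∃ φ : List ℕ → List ℕ, Computable φ ∧ (∀ l l' : List ℕ, l <+: l' → φ l <+: φ l') ∧
    ∀ p ∈ D, (∀ m, PrefixOfFun (φ (initSeg p m)) (F p)) ∧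
      ∀ n, ∃ m, n ≤ (φ (initSeg p m)).length

/-- Pairing on Baire space. -/
def pairB (p q : Baire) : Baire := fun n => if n % 2 = 0 then p (n / 2) else q (n / 2)

def evens (p : Baire) : Baire := fun n => p (2 * n)

def odds (p : Baire) : Baire := fun n => p (2 * n + 1)

/-- `F` is a realizer of the multivalued function `f`, w.r.t. representations
`δX`, `δY` (given as functional relations between names and points). -/
def Realizes {X Y : Type} (δX : Baire → X → Prop) (δY : Baire → Y → Prop)
    (f : X → Set Y) (F : Baire → Baire) : Prop :=
  ∀ p x, δX p x → (f x).Nonempty → ∃ y, δY (F p) y ∧ y ∈ f x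

/-- The names of points in the domain of the multivalued function `f`. -/
def domNames {X Y : Type} (δX : Baire → X → Prop) (f : X → Set Y) : Set Baire :=
  {p | ∃ x, δX p x ∧ (f x).Nonempty}

/-- Weihrauch reducibility `f ≤_W g`. -/
def WRed {X Y Z W : Type} (δX : Baire → X → Prop) (δY : Baire → Y → Prop)
    (δZ : Baire → Z → Prop) (δW : Baire → W → Prop)
    (f : X → Set Y) (g : Z → Set W) : Prop :=
  ∃ H K : Baire → Baire, ComputableOn H (domNames δX f) ∧
    ∀ G : Baire → Baire, Realizes δZ δW g G →
      ComputableOn K {r | ∃ p ∈ domNames δX f, r = pairB p (G (H p))} ∧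
      Realizes δX δY f fun p => K (pairB p (G (H p)))

/-- Weihrauch equivalence. -/
def WEquiv {X Y Z W : Type} (δX : Baire → X → Prop) (δY : Baire → Y → Prop)
    (δZ : Baire → Z → Prop) (δW : Baire → W → Prop)
    (f : X → Set Y) (g : Z → Set W) : Prop :=
  WRed δX δY δZ δW f g ∧ WRed δZ δW δX δY g f

/-- The multivalued function `f` is computable. -/
def ComputableMF {X Y : Type} (δX : Baire → X → Prop) (δY : Baire → Y → Prop)
    (f : X → Set Y) : Prop :=
  ∃ F : Baire → Baire, ComputableOn F (domNames δX f) ∧ Realizes δX δY f F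

/-- Representation of `ℕ`. -/
def repNat : Baire → ℕ → Prop := fun p n => p 0 = n

/-- Representation of Baire space. -/
def repBaire : Baire → Baire → Prop := fun p q => p = q

/-- Representation of Cantor space. -/
def repCantor : Baire → Cantor → Prop := fun p x => ∀ n, p n = if x n then 1 else 0

/-- Representation of closed subsets of `ℕ` by enumerations of their complements. -/
def repClosedNat : Baire → Set ℕ → Prop := fun p A => ∀ n, n ∈ A ↔ ¬ ∃ i, p i = n + 1

/-- Representation of open subsets of `ℕ` by enumerations. -/
def repOpenNat : Baire → Set ℕ → Prop := fun p A => ∀ n, n ∈ A ↔ ∃ i, p i = n + 1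

/-- Product representation. -/
def prodRep {X Z : Type} (δX : Baire → X → Prop) (δZ : Baire → Z → Prop) :
    Baire → X × Z → Prop := fun p xz => δX (evens p) xz.1 ∧ δZ (odds p) xz.2

/-- Representation of countable powers. -/
def seqRep {X : Type} (δX : Baire → X → Prop) : Baire → (ℕ → X) → Prop :=
  fun p xs => ∀ i, δX (fun n => p (Nat.pair i n)) (xs i)

/-- Product of multivalued functions. -/
def prodMF {X Y Z W : Type} (f : X → Set Y) (g : Z → Set W) : X × Z → Set (Y × W) :=
  fun xz => f xz.1 ×ˢ g xz.2

/-- Composition of multivalued functions (with the usual domain condition). -/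
def compMF {X Y Z : Type} (g : Y → Set Z) (f : X → Set Y) : X → Set Z :=
  fun x => {z | (∀ y ∈ f x, (g y).Nonempty) ∧ ∃ y ∈ f x, z ∈ g y}

/-- The cylinder of a finite binary word. -/
def cyl (w : List Bool) : Set Cantor := {x | ∀ i : Fin w.length, x i = w.get i}

/-- Decoding a natural number as a finite binary word. -/
def wordOf (k : ℕ) : List Bool := (Encodable.decode (α := List Bool) k).getD []

/-- The open subset of Cantor space enumerated by `p` (as a union of cylinders). -/
def openOf (p : Baire) : Set Cantor :=
  ⋃ i, if p i = 0 then (∅ : Set Cantor) else cyl (wordOf (p i - 1))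

/-- Representation of open subsets of Cantor space. -/
def repOpenCantor : Baire → Set Cantor → Prop := fun p U => U = openOf p

/-- Representation of closed subsets of Cantor space. -/
def repClosedCantor : Baire → Set Cantor → Prop := fun p A => A = (openOf p)ᶜ

/-- The number of binary words of length `n` whose cylinder is contained in `U`. -/
noncomputable def cylCount (U : Set Cantor) (n : ℕ) : ℕ :=
  Nat.card {w : Fin n → Bool // cyl (List.ofFn w) ⊆ U}

/-- For an open set `U`, `lebLe U i` expresses `λ(U) ≤ 2^{-i}` for the uniform measure. -/
def lebLe (U : Set Cantor) (i : ℕ) : Prop := ∀ n, 2 ^ i * cylCount U n ≤ 2 ^ n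

/-- A Martin-Löf test: a computable sequence of (codes of) open sets `U_i` with
`λ(U_i) ≤ 2^{-i}`. -/
structure MLTest where
  e : ℕ → ℕ → ℕ
  comp : Computable₂ e
  meas : ∀ i, lebLe (openOf (e i)) i

/-- The `i`-th level of a Martin-Löf test. -/
def MLTest.U (T : MLTest) (i : ℕ) : Set Cantor := openOf (T.e i)

/-- Martin-Löf randomness. -/
def MLRandom (x : Cantor) : Prop := ∀ T : MLTest, ∃ i, x ∉ T.U i

/-- A universal Martin-Löf test. -/
def MLTest.Universal (T : MLTest) : Prop := ∀ T' : MLTest, (⋂ i, T'.U i) ⊆ ⋂ i, T.U i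

/-- Closed choice on the naturals, as a multivalued function on `A(ℕ)`. -/
def CN : Set ℕ → Set ℕ := fun A => A

/-- `d_MLR : MLR → {1}`. -/
def dMLR : Cantor → Set ℕ := fun x => {n | MLRandom x ∧ n = 1}

/-- The degree `LAY = C_ℕ × d_MLR`. -/
def LAY : Set ℕ × Cantor → Set (ℕ × ℕ) := prodMF CN dMLR

abbrev repLAYin : Baire → Set ℕ × Cantor → Prop := prodRep repClosedNat repCantor
abbrev repPairNat : Baire → ℕ × ℕ → Prop := prodRep repNat repNat

/-- The layer map of a Martin-Löf test: `n ∈ Lay T x` iff `x ∉ U_n`. -/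
def Lay (T : MLTest) : Cantor → Set ℕ := fun x => {n | MLRandom x ∧ x ∉ T.U n}

/-- The randomness deficiency map: `RD T x = min {n | x ∉ U_n}`. -/
def RD (T : MLTest) : Cantor → Set ℕ := fun x => {n | MLRandom x ∧ IsLeast {m | x ∉ T.U m} n}

/-- `f : MLR ⇉ X` is layerwise computable w.r.t. the test `T`: some computable
`g(p, k)` produces a value in `f p` whenever `p ∉ U_k`. -/
def LayerwiseComputable (T : MLTest) {X : Type} (δX : Baire → X → Prop)
    (f : Cantor → Set X) : Prop :=
  ∃ G : Baire → Baire,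
    ComputableOn G {r | ∃ p x k, repCantor p x ∧ x ∉ T.U k ∧ (f x).Nonempty ∧
      r = pairB p fun _ => k} ∧
    ∀ p x k, repCantor p x → x ∉ T.U k → (f x).Nonempty →
      ∃ y, δX (G (pairB p fun _ => k)) y ∧ y ∈ f x

/-- Layerwise computability for multivalued functions with an additional input. -/
def LayerwiseComputable₂ (T : MLTest) {I X : Type} (δI : Baire → I → Prop)
    (δX : Baire → X → Prop) (f : Cantor × I → Set X) : Prop :=
  ∃ G : Baire → Baire,
    ComputableOn G {r | ∃ p q x i k, repCantor p x ∧ δI q i ∧ x ∉ T.U k ∧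
      (f (x, i)).Nonempty ∧ r = pairB (pairB p q) fun _ => k} ∧
    ∀ p q x i k, repCantor p x → δI q i → x ∉ T.U k → (f (x, i)).Nonempty →
      ∃ y, δX (G (pairB (pairB p q) fun _ => k)) y ∧ y ∈ f (x, i)

/-- `Σ_{i<|w|} (2 w(i) - 1)`: the signed count of a binary word. -/
def signedSum (w : List Bool) : ℤ := (w.count true : ℤ) - (w.count false : ℤ)

/-- The prefix of length `n` of a point of Cantor space. -/
def initBits (x : Cantor) (n : ℕ) : List Bool := List.ofFn fun i : Fin n => x i

/-- The maximum map on (nonempty, bounded) open subsets of `ℕ`. -/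
def maxON : Set ℕ → Set ℕ := fun U => {n | IsGreatest U n}

/-! `C_ℕ ≤_W max`: for a closed `A ⊆ ℕ`, the set `lowerBounds A = {n | ∀ m < n, m ∉ A}` is open
uniformly in a name of `A`, and its maximum is `min A ∈ A`.

`max ≤_W C_ℕ`: from an enumeration `q` of `U`, the pairs `⟨n, i⟩` with `q i = n + 1` and
`q j ≤ n + 1` for all `j` form a closed set, nonempty when `U` has a maximum, and the first
component of any of its elements is `max U`.

Both name transformations are dovetailed searches in which each output entry depends on a finite
prefix of the input, so they are computable. -/

theorem exists_bound_of_forall_lt {P : ℕ → ℕ → Prop} {n : ℕ} (h : ∀ m < n, ∃ i, P m i) :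
    ∃ t, ∀ m < n, ∃ i < t, P m i := by
  choose! w hw using h
  exact ⟨(Finset.range n).sup w + 1, fun m hm =>
    ⟨w m, Nat.lt_succ_of_le (Finset.le_sup (Finset.mem_range.2 hm)), hw m hm⟩⟩

theorem mem_of_isGLB {α : Type*} [ConditionallyCompleteLinearOrder α] [WellFoundedLT α]
    {A : Set α} {a : α} (ha : IsGLB A a) (hA : A.Nonempty) : a ∈ A :=
  ha.unique (isLeast_csInf hA).isGLB ▸ (isLeast_csInf hA).1

theorem initSeg_take (p : Baire) {m n : ℕ} (h : n ≤ m) : (initSeg p m).take n = initSeg p n := by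
  rw [initSeg, ← List.map_take, List.take_range, Nat.min_eq_left h, initSeg]

theorem mem_initSeg {p : Baire} {m a : ℕ} : a ∈ initSeg p m ↔ ∃ i < m, p i = a := by
  simp [initSeg]

theorem initSeg_getD {p : Baire} {m i : ℕ} (h : i < m) : (initSeg p m).getD i 0 = p i := by
  simp [initSeg, h]

theorem pairB_one (p q : Baire) : pairB p q 1 = q 0 := rfl

def prefixMap (h : List ℕ → ℕ → ℕ) (c : ℕ) (p : Baire) : Baire := fun k => h (initSeg p (k + c)) k

theorem prefixMap_apply (h : List ℕ → ℕ → ℕ) (c : ℕ) (p : Baire) (k : ℕ) :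
    prefixMap h c p k = h (initSeg p (k + c)) k := rfl

theorem computableOn_prefixMap {h : List ℕ → ℕ → ℕ} (hh : Primrec₂ h) (c : ℕ) (D : Set Baire) :
    ComputableOn (prefixMap h c) D := by
  refine ⟨fun l => (List.range (l.length - c)).map fun k => h (l.take (k + c)) k, ?_, ?_, ?_⟩
  · exact (Primrec.list_map (g := fun l k => h (l.take (k + c)) k)
      (Primrec.list_range.comp (Primrec.nat_sub.comp Primrec.list_length (Primrec.const c)))
      (hh.comp (Primrec.list_take.comp (Primrec.nat_add.comp Primrec.snd (Primrec.const c))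
        Primrec.fst) Primrec.snd)).to_comp
  · intro l l' hl
    have hrange : List.range (l.length - c) <+: List.range (l'.length - c) := by
      rw [← Nat.min_eq_left (Nat.sub_le_sub_right hl.length_le c), ← List.take_range]
      exact List.take_prefix _ _
    have htake : ∀ k ∈ List.range (l.length - c), l.take (k + c) = l'.take (k + c) := by
      intro k hk
      rw [List.mem_range] at hk
      rw [List.prefix_iff_eq_take.mp hl, List.take_take, Nat.min_eq_left (by omega)]
    dsimp only
    rw [List.map_congr_left fun k hk => congrArg (h · k) (htake k hk)]
    exact hrange.map _
  · intro p _
    refine ⟨fun m i => ?_, fun n => ⟨n + c, by simp [initSeg]⟩⟩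
    have hi : i.1 + c ≤ m := by
      have := i.2
      simp only [initSeg, List.length_map, List.length_range] at this
      omega
    simp [prefixMap_apply, initSeg_take p hi]

theorem wRed_of_prefixMap {X Z : Type} {δX : Baire → X → Prop} {δZ : Baire → Z → Prop}
    {f : X → Set ℕ} {g : Z → Set ℕ} {h : List ℕ → ℕ → ℕ} (hh : Primrec₂ h) (c : ℕ)
    {e : ℕ → ℕ} (he : Primrec e)
    (hred : ∀ p x, δX p x → (f x).Nonempty →
      ∃ z, δZ (prefixMap h c p) z ∧ (g z).Nonempty ∧ ∀ w ∈ g z, e w ∈ f x) :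
    WRed δX repNat δZ repNat f g := by
  have he' : Primrec₂ fun (l : List ℕ) (_ : ℕ) => e (l.getD 1 0) :=
    he.comp ((Primrec.list_getD 0).comp Primrec.fst (Primrec.const 1))
  -- lookahead `2`: output `0` reads the answer `r 0`, stored at index `1` of `pairB p r`
  refine ⟨prefixMap h c, prefixMap (fun l _ => e (l.getD 1 0)) 2,
    computableOn_prefixMap hh c _, fun G hG => ⟨computableOn_prefixMap he' 2 _, ?_⟩⟩
  intro p x hpx hfx
  obtain ⟨z, hz, hgz, hsol⟩ := hred p x hpx hfx
  obtain ⟨w, hw, hwz⟩ := hG _ z hz hgz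
  refine ⟨e w, ?_, hsol w hwz⟩
  show e ((initSeg _ (0 + 2)).getD 1 0) = e w
  rw [initSeg_getD (by omega), pairB_one, hw]

def dovetail (P : List ℕ → ℕ → ℕ → Prop) [∀ l k j, Decidable (P l k j)] (l : List ℕ) (s : ℕ) :
    ℕ :=
  if P l s.unpair.1 s.unpair.2 then s.unpair.1 + 1 else 0

section Dovetail

variable {P : List ℕ → ℕ → ℕ → Prop} [∀ l k j, Decidable (P l k j)]

theorem primrec₂_dovetail (hP : PrimrecPred fun x : List ℕ × ℕ × ℕ => P x.1 x.2.1 x.2.2) :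
    Primrec₂ (dovetail P) :=
  Primrec.ite (hP.comp (Primrec.fst.pair (Primrec.unpair.comp Primrec.snd)))
    (Primrec.succ.comp (Primrec.fst.comp (Primrec.unpair.comp Primrec.snd))) (Primrec.const 0)

theorem exists_prefixMap_dovetail_eq_succ_iff (c : ℕ) (p : Baire) (k : ℕ) :
    (∃ s, prefixMap (dovetail P) c p s = k + 1) ↔
      ∃ j, P (initSeg p (Nat.pair k j + c)) k j := by
  constructor
  · rintro ⟨s, hs⟩
    rw [prefixMap_apply, dovetail] at hs
    split_ifs at hs with hP
    · refine ⟨s.unpair.2, ?_⟩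
      rwa [← Nat.succ_injective hs, Nat.pair_unpair]
  · rintro ⟨j, hj⟩
    exact ⟨Nat.pair k j, by simp [prefixMap_apply, dovetail, hj]⟩

end Dovetail

abbrev ListsAllBelow (l : List ℕ) (n _ : ℕ) : Prop := ∀ m < n, m + 1 ∈ l

theorem primrecPred_listsAllBelow :
    PrimrecPred fun x : List ℕ × ℕ × ℕ => ListsAllBelow x.1 x.2.1 x.2.2 := by
  have hmem : PrimrecRel fun (m : ℕ) (l : List ℕ) => m + 1 ∈ l :=
    ((PrimrecRel.exists_mem_list (R := fun a (m : ℕ) => a = m + 1)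
      (Primrec.eq.comp Primrec.fst (Primrec.succ.comp Primrec.snd))).comp
      Primrec.snd Primrec.fst).of_eq fun x => by simp
  exact ((PrimrecRel.forall_mem_list hmem).comp (Primrec.list_range.comp
    (Primrec.fst.comp Primrec.snd)) Primrec.fst).of_eq fun x => by simp

theorem repOpenNat_lowerBounds {p : Baire} {A : Set ℕ} (hp : repClosedNat p A) :
    repOpenNat (prefixMap (dovetail ListsAllBelow) 1 p) (lowerBounds A) := by
  intro n
  rw [exists_prefixMap_dovetail_eq_succ_iff]
  have hlb : n ∈ lowerBounds A ↔ ∀ m < n, ∃ i, p i = m + 1 := by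
    simp only [mem_lowerBounds, ← not_lt]
    exact forall_congr' fun m => by rw [hp m]; tauto
  simp only [hlb, ListsAllBelow, mem_initSeg]
  constructor
  · intro hn
    obtain ⟨t, ht⟩ := exists_bound_of_forall_lt hn
    refine ⟨t, fun m hm => ?_⟩
    obtain ⟨i, hi, hpi⟩ := ht m hm
    exact ⟨i, by have := Nat.right_le_pair n t; omega, hpi⟩
  · rintro ⟨j, hj⟩ m hm
    obtain ⟨i, -, hpi⟩ := hj m hm
    exact ⟨i, hpi⟩

def maxWitnesses (q : Baire) : Set ℕ :=
  {k | q k.unpair.2 = k.unpair.1 + 1 ∧ ∀ j, q j ≤ k.unpair.1 + 1}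

abbrev RefutesMaxWitness (l : List ℕ) (k j : ℕ) : Prop :=
  l.getD k.unpair.2 0 ≠ k.unpair.1 + 1 ∨ k.unpair.1 + 1 < l.getD j 0

theorem primrecPred_refutesMaxWitness :
    PrimrecPred fun x : List ℕ × ℕ × ℕ => RefutesMaxWitness x.1 x.2.1 x.2.2 := by
  have hk : Primrec fun x : List ℕ × ℕ × ℕ => x.2.1.unpair :=
    Primrec.unpair.comp (Primrec.fst.comp Primrec.snd)
  have hn : Primrec fun x : List ℕ × ℕ × ℕ => x.2.1.unpair.1 + 1 :=
    Primrec.succ.comp (Primrec.fst.comp hk)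
  exact PrimrecPred.or
    (Primrec.eq.comp ((Primrec.list_getD 0).comp Primrec.fst (Primrec.snd.comp hk)) hn).not
    (Primrec.nat_lt.comp hn ((Primrec.list_getD 0).comp Primrec.fst (Primrec.snd.comp
      Primrec.snd)))

theorem repClosedNat_maxWitnesses (q : Baire) :
    repClosedNat (prefixMap (dovetail RefutesMaxWitness) 1 q) (maxWitnesses q) := by
  intro k
  rw [exists_prefixMap_dovetail_eq_succ_iff]
  have hread : ∀ j, RefutesMaxWitness (initSeg q (Nat.pair k j + 1)) k j ↔
      q k.unpair.2 ≠ k.unpair.1 + 1 ∨ k.unpair.1 + 1 < q j := by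
    intro j
    have := Nat.unpair_right_le k
    have := Nat.left_le_pair k j
    have := Nat.right_le_pair k j
    rw [RefutesMaxWitness, initSeg_getD (by omega), initSeg_getD (by omega)]
  simp only [hread, maxWitnesses, Set.mem_ofPred_eq, not_exists, not_or, not_not, not_lt]
  exact ⟨fun h j => ⟨h.1, h.2 j⟩, fun h => ⟨(h 0).1, fun j => (h j).2⟩⟩

theorem maxWitnesses_nonempty {q : Baire} {U : Set ℕ} {M : ℕ} (hq : repOpenNat q U)
    (hM : IsGreatest U M) : (maxWitnesses q).Nonempty := by
  obtain ⟨i, hi⟩ := (hq M).1 hM.1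
  refine ⟨Nat.pair M i, ?_⟩
  simp only [maxWitnesses, Set.mem_ofPred_eq, Nat.unpair_pair]
  refine ⟨hi, fun j => ?_⟩
  rcases hqj : q j with _ | m
  · omega
  · have : m ≤ M := hM.2 ((hq m).2 ⟨j, hqj⟩)
    omega

theorem isGreatest_of_mem_maxWitnesses {q : Baire} {U : Set ℕ} {k : ℕ} (hq : repOpenNat q U)
    (hk : k ∈ maxWitnesses q) : IsGreatest U k.unpair.1 := by
  refine ⟨(hq _).2 ⟨_, hk.1⟩, fun m hm => ?_⟩
  obtain ⟨j, hj⟩ := (hq m).1 hm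
  have := hk.2 j
  omega

/-- Closed choice on ℕ is Weihrauch equivalent to `max : ⊆ O(ℕ) → ℕ`. -/
theorem CN_equivW_max : WEquiv repClosedNat repNat repOpenNat repNat CN maxON := by
  constructor
  · refine wRed_of_prefixMap (primrec₂_dovetail primrecPred_listsAllBelow) 1 Primrec.id ?_
    intro p A hp hA
    exact ⟨lowerBounds A, repOpenNat_lowerBounds hp, ⟨sInf A, (isLeast_csInf hA).isGLB⟩,
      fun w hw => mem_of_isGLB hw hA⟩
  · refine wRed_of_prefixMap (primrec₂_dovetail primrecPred_refutesMaxWitness) 1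
      (Primrec.fst.comp Primrec.unpair) ?_
    rintro q U hq ⟨M, hM⟩
    exact ⟨maxWitnesses q, repClosedNat_maxWitnesses q, maxWitnesses_nonempty hq hM,
      fun k hk => isGreatest_of_mem_maxWitnesses hq hk⟩

end WL
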